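/- arXiv:1101.1400 — 2 statements merged into one kernel-verified Lean document; each statement's English description precedes it below -/
import Mathlib

section
/- For n ≥ 3 and k ≥ 0, every braid β of the positive braid monoid B⁺_n admits a unique maximal right divisor lying in φ_n^k(B⁺_{n−1}); that is, there exists a unique β₁ ∈ φ_n^k(B⁺_{n−1}) such that β₁ right divides β and every right divisor of β lying in φ_n^k(B⁺_{n−1}) right divides β₁. -/
namespace Braid

/-- Defining relations of the braid group, with generators indexed by `Fin m`
(the index `i : Fin m` stands for the Artin generator `σ_{i+1}`). -/
def braidRels (m : ℕ) : Set (FreeGroup (Fin m)) :=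
  {r | ∃ i j : Fin m,
      ((i : ℕ) + 2 ≤ (j : ℕ) ∧
        r = FreeGroup.of i * FreeGroup.of j * (FreeGroup.of i)⁻¹ * (FreeGroup.of j)⁻¹) ∨
      ((j : ℕ) = (i : ℕ) + 1 ∧
        r = FreeGroup.of i * FreeGroup.of j * FreeGroup.of i *
            (FreeGroup.of j)⁻¹ * (FreeGroup.of i)⁻¹ * (FreeGroup.of j)⁻¹)}

/-- The braid group `B_n` on `n` strands, presented by the Artin generators
`σ_1, …, σ_{n-1}` and the braid relations. -/
abbrev B (n : ℕ) : Type := PresentedGroup (braidRels (n - 1))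

/-- The Artin generator `σ_i` of `B n`, for `1 ≤ i ≤ n-1` (junk value `1` otherwise). -/
def gen (n i : ℕ) : B n :=
  if h : i - 1 < n - 1 then PresentedGroup.of (⟨i - 1, h⟩ : Fin (n - 1)) else 1

/-- The positive braid monoid `B⁺_k` inside `B n`: the submonoid generated by
`σ_1, …, σ_{k-1}`. -/
def Bplus (n k : ℕ) : Submonoid (B n) :=
  Submonoid.closure {x | ∃ i, 1 ≤ i ∧ i + 1 ≤ k ∧ x = gen n i}

/-- The subgroup `B_k` of `B n`, generated by `σ_1, …, σ_{k-1}`. -/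
def Bsub (n k : ℕ) : Subgroup (B n) :=
  Subgroup.closure {x | ∃ i, 1 ≤ i ∧ i + 1 ≤ k ∧ x = gen n i}

/-- `β` left-divides `γ` (with respect to the positive monoid `B⁺_n`). -/
def LDiv (n : ℕ) (β γ : B n) : Prop := β⁻¹ * γ ∈ Bplus n n

/-- `β` right-divides `γ` (with respect to the positive monoid `B⁺_n`). -/
def RDiv (n : ℕ) (β γ : B n) : Prop := γ * β⁻¹ ∈ Bplus n n

/-- The Garside element `Δ_k = (σ_1⋯σ_{k-1})(σ_1⋯σ_{k-2})⋯(σ_1σ_2)σ_1` of `B⁺_k`,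
viewed inside `B n`. -/
def delta (n k : ℕ) : B n :=
  ((List.range (k - 1)).reverse.map
    (fun j => ((List.range' 1 (j + 1)).map (gen n)).prod)).prod

/-- The `k`-th power of the flip automorphism `φ_n` of `B n`:
conjugation by `Δ_n^k`. -/
def flip (n k : ℕ) (x : B n) : B n := delta n n ^ k * x * (delta n n ^ k)⁻¹

/-- The set `φ_n^k(B⁺_{n-1})` inside `B n`. -/
def flipSet (n k : ℕ) : Set (B n) := flip n k '' (Bplus n (n - 1) : Set (B n))

/-- `δ` is the maximal right divisor of `β` lying in the set `X`:
`δ ∈ X`, `δ` right-divides `β`, and every right divisor of `β` lying in `X`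
right-divides `δ`. -/
def IsMaxRDivIn (n : ℕ) (X : Set (B n)) (β δ : B n) : Prop :=
  δ ∈ X ∧ RDiv n δ β ∧ ∀ γ ∈ X, RDiv n γ β → RDiv n γ δ

/-- The product `φ_n^{d-1}(b d) ⋯ φ_n^{k-1}(b k)` (factors in decreasing order of
the index, from `d` down to `k`). -/
def tailProd (n : ℕ) (b : ℕ → B n) (k d : ℕ) : B n :=
  ((List.range' k (d + 1 - k)).reverse.map (fun l => flip n (l - 1) (b l))).prod

/-- `(b d, …, b 1)` is the `φ_n`-splitting of `β`: each `b k` lies in `B⁺_{n-1}`,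
`b d ≠ 1`, `β = φ_n^{d-1}(b d) ⋯ φ_n(b 2) (b 1)`, and for each `k`, the element
`φ_n^{k-1}(b k)` is the maximal right divisor of `φ_n^{d-1}(b d) ⋯ φ_n^{k-1}(b k)`
lying in `φ_n^{k-1}(B⁺_{n-1})`. -/
def IsSplitting (n d : ℕ) (b : ℕ → B n) (β : B n) : Prop :=
  1 ≤ d ∧ (∀ k, 1 ≤ k → k ≤ d → b k ∈ Bplus n (n - 1)) ∧ b d ≠ 1 ∧
  β = tailProd n b 1 d ∧
  ∀ k, 1 ≤ k → k ≤ d →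
    IsMaxRDivIn n (flipSet n (k - 1)) (tailProd n b k d) (flip n (k - 1) (b k))

/-- Evaluation of a word over the letters `σ_i^{±1}` in `B n`: the letter `(i, true)`
stands for `σ_i` and `(i, false)` for `σ_i⁻¹`. -/
def evalWord (n : ℕ) (w : List (ℕ × Bool)) : B n :=
  (w.map (fun p => if p.2 then gen n p.1 else (gen n p.1)⁻¹)).prod

/-- A word over the letters `σ_j^{±1}` is `σ_i`-positive: it contains at least one
letter `σ_i`, no letter `σ_i⁻¹` and no letter `σ_j^{±1}` with `j > i`. -/
def SigmaPos (i : ℕ) (w : List (ℕ × Bool)) : Prop :=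
  (i, true) ∈ w ∧ (i, false) ∉ w ∧ ∀ p ∈ w, 1 ≤ p.1 ∧ p.1 ≤ i

/-- A word over the letters `σ_j^{±1}` is `σ_i`-negative: it contains at least one
letter `σ_i⁻¹`, no letter `σ_i` and no letter `σ_j^{±1}` with `j > i`. -/
def SigmaNeg (i : ℕ) (w : List (ℕ × Bool)) : Prop :=
  (i, false) ∈ w ∧ (i, true) ∉ w ∧ ∀ p ∈ w, 1 ≤ p.1 ∧ p.1 ≤ i

/-- The Dehornoy ordering on `B n`: `β < γ` iff `β⁻¹γ` is represented by a
`σ_i`-positive word for some `i ≤ n-1`. -/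
def dlt (n : ℕ) (β γ : B n) : Prop :=
  ∃ i w, i + 1 ≤ n ∧ SigmaPos i w ∧ evalWord n w = β⁻¹ * γ

/-- The nonstrict Dehornoy ordering. -/
def dle (n : ℕ) (β γ : B n) : Prop := dlt n β γ ∨ β = γ

/-- The minimal length of a word over `σ_1^{±1}, …, σ_{n-1}^{±1}` representing `β`. -/
noncomputable def normSigma (n : ℕ) (β : B n) : ℕ :=
  sInf {l | ∃ w : List (ℕ × Bool), (∀ p ∈ w, 1 ≤ p.1 ∧ p.1 ≤ n - 1) ∧
    evalWord n w = β ∧ w.length = l}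

/-- The (common) length of the positive words over `σ_1, …, σ_{n-1}` representing a
positive braid `β`. -/
noncomputable def posLen (n : ℕ) (β : B n) : ℕ :=
  sInf {l | ∃ w : List (ℕ × Bool), (∀ p ∈ w, 1 ≤ p.1 ∧ p.1 ≤ n - 1 ∧ p.2 = true) ∧
    evalWord n w = β ∧ w.length = l}

/-- The Birman–Ko–Lee generator `a_{p,q} = σ_p ⋯ σ_{q-2} σ_{q-1} σ_{q-2}⁻¹ ⋯ σ_p⁻¹`
of `B n`. -/
def bkl (n p q : ℕ) : B n :=
  ((List.range' p (q - 1 - p)).map (gen n)).prod * gen n (q - 1) *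
    (((List.range' p (q - 1 - p)).map (gen n)).prod)⁻¹

/-- The dual braid monoid `B⁺*_n`: the submonoid of `B n` generated by the
Birman–Ko–Lee generators. -/
def DualBplus (n : ℕ) : Submonoid (B n) :=
  Submonoid.closure {x | ∃ p q, 1 ≤ p ∧ p < q ∧ q ≤ n ∧ x = bkl n p q}

/-- Evaluation in `B n` of a word over the letters `a_{p,q}^{±1}`. -/
def evalDual (n : ℕ) (w : List ((ℕ × ℕ) × Bool)) : B n :=
  (w.map (fun l => if l.2 then bkl n l.1.1 l.1.2 else (bkl n l.1.1 l.1.2)⁻¹)).prod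

/-- The minimal length of a word over the letters `a_{p,q}^{±1}` (`1 ≤ p < q ≤ n`)
representing `β`. -/
noncomputable def normDual (n : ℕ) (β : B n) : ℕ :=
  sInf {l | ∃ w : List ((ℕ × ℕ) × Bool),
    (∀ p ∈ w, 1 ≤ p.1.1 ∧ p.1.1 < p.1.2 ∧ p.1.2 ≤ n) ∧ evalDual n w = β ∧ w.length = l}

end Braid

/-!
Positive braid words modulo the braid relations form the positive braid monoid. Garside's lemma
(if `a u = b v` with letters `a ≠ b`, then `u` and `v` are right multiples of the complements of
`a` and `b` in their least common multiple) is proved by induction on the length, through the cube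
condition on three letters. It gives cancellativity, and for two prefixes of a word a common
multiple that is still a prefix of the word and is written in the letters of the two prefixes.
Hence, for any alphabet `A`, a longest suffix of a word that is written in `A` is right-divisible
by every other such suffix.

Garside's embedding theorem transfers this to `B_n`: as `Δ_n²` is central, `B_n` acts on positive
braids with `Δ_n²` inverted, and the orbit of `1` separates positive words. Since
`φ_n(σ_i) = σ_{n-i}`, the set `φ_n^k(B⁺_{n-1})` is the submonoid generated by `σ_1, …, σ_{n-2}` or
by `σ_2, …, σ_{n-1}`, according to the parity of `k`. Uniqueness is antisymmetry of right
divisibility in `B⁺_n`.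
-/

theorem Set.image_list_map {α β : Type*} (f : α → β) (s : Set α) :
    List.map f '' {l | ∀ x ∈ l, x ∈ s} = {l | ∀ y ∈ l, y ∈ f '' s} := by
  rw [← Set.range_list_map_coe, ← Set.range_comp, Set.image_eq_range f s, ← Set.range_list_map]
  congr 1
  funext l
  simp

theorem Relation.EqvGen.exists_iterate_eq {α : Type*} {f : α → α} {x y : α}
    (h : EqvGen (fun p q => q = f p) x y) : ∃ i j, f^[i] x = f^[j] y := by
  induction h with
  | rel x y h => exact ⟨1, 0, h.symm⟩
  | refl x => exact ⟨0, 0, rfl⟩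
  | symm x y _ ih =>
    obtain ⟨i, j, h⟩ := ih
    exact ⟨j, i, h.symm⟩
  | trans x y z _ _ ih₁ ih₂ =>
    obtain ⟨i, j, h₁⟩ := ih₁
    obtain ⟨i', j', h₂⟩ := ih₂
    refine ⟨i' + i, j + j', ?_⟩
    rw [Function.iterate_add_apply, h₁, ← Function.iterate_add_apply, add_comm,
      Function.iterate_add_apply, h₂, ← Function.iterate_add_apply]

namespace Braid

open Relation

/-- Letter `i : ℕ` of a positive braid word stands for `σ_{i+1}`. -/
inductive Step : List ℕ → List ℕ → Prop
  | swap (u v : List ℕ) {i j : ℕ} (h : i + 2 ≤ j) : Step (u ++ i :: j :: v) (u ++ j :: i :: v)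
  | braid (u v : List ℕ) (i : ℕ) :
      Step (u ++ i :: (i + 1) :: i :: v) (u ++ (i + 1) :: i :: (i + 1) :: v)

namespace Step

variable {u v : List ℕ}

theorem append (x y : List ℕ) (h : Step u v) : Step (x ++ u ++ y) (x ++ v ++ y) := by
  cases h with
  | swap u v h => simpa using Step.swap (x ++ u) (v ++ y) h
  | braid u v i => simpa using Step.braid (x ++ u) (v ++ y) i

theorem length_eq (h : Step u v) : u.length = v.length := by
  cases h <;> simp

theorem mem_iff (h : Step u v) {x : ℕ} : x ∈ u ↔ x ∈ v := by
  cases h <;> simp only [List.mem_append, List.mem_cons] <;> tauto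

theorem reverse (h : Step u v) : SymmGen Step u.reverse v.reverse := by
  cases h with
  | swap u v h => exact .of_rel_symm (by simpa using Step.swap v.reverse u.reverse h)
  | braid u v i => exact .of_rel (by simpa using Step.braid v.reverse u.reverse i)

end Step

def WordEqv : List ℕ → List ℕ → Prop := ReflTransGen (SymmGen Step)

infix:50 " ~~ " => WordEqv

namespace WordEqv

variable {u v w : List ℕ}

theorem refl (u : List ℕ) : u ~~ u := ReflTransGen.refl

protected theorem rfl : u ~~ u := ReflTransGen.refl

theorem symm (h : u ~~ v) : v ~~ u := Std.Symm.symm (r := ReflTransGen (SymmGen Step)) _ _ h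

theorem trans (h : u ~~ v) (h' : v ~~ w) : u ~~ w := ReflTransGen.trans h h'

instance : Trans WordEqv WordEqv WordEqv := ⟨trans⟩

theorem append (x y : List ℕ) (h : u ~~ v) : x ++ u ++ y ~~ x ++ v ++ y :=
  ReflTransGen.lift (fun w => x ++ w ++ y)
    (fun _ _ h => h.elim (fun h => .of_rel (h.append x y)) (fun h => .of_rel_symm (h.append x y)))
    _ _ h

theorem append_left (x : List ℕ) (h : u ~~ v) : x ++ u ~~ x ++ v := by
  simpa using h.append x []

theorem append_right (y : List ℕ) (h : u ~~ v) : u ++ y ~~ v ++ y := by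
  simpa using h.append [] y

theorem cons (x : ℕ) (h : u ~~ v) : x :: u ~~ x :: v := h.append_left [x]

theorem length_eq (h : u ~~ v) : u.length = v.length := by
  induction h with
  | refl => rfl
  | tail _ hs ih => exact ih.trans (hs.elim Step.length_eq fun h => h.length_eq.symm)

theorem mem_iff (h : u ~~ v) {x : ℕ} : x ∈ u ↔ x ∈ v := by
  induction h with
  | refl => rfl
  | tail _ hs ih => exact ih.trans (hs.elim (fun h => h.mem_iff) fun h => h.mem_iff.symm)

theorem reverse (h : u ~~ v) : u.reverse ~~ v.reverse :=
  ReflTransGen.lift List.reverse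
    (fun _ _ h => h.elim Step.reverse fun h => h.reverse.symm) _ _ h

theorem reverse_iff : u.reverse ~~ v.reverse ↔ u ~~ v :=
  ⟨fun h => by simpa using h.reverse, reverse⟩

end WordEqv

theorem Step.eqv {u v : List ℕ} (h : Step u v) : u ~~ v := ReflTransGen.single (.of_rel h)

theorem eqv_swap {a b : ℕ} (h : a + 2 ≤ b ∨ b + 2 ≤ a) (z : List ℕ) :
    a :: b :: z ~~ b :: a :: z := by
  rcases h with h | h
  · exact (Step.swap [] z h).eqv
  · exact (Step.swap [] z h).eqv.symm

theorem eqv_braid {a b : ℕ} (h : a + 1 = b ∨ b + 1 = a) (z : List ℕ) :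
    a :: b :: a :: z ~~ b :: a :: b :: z := by
  rcases h with rfl | rfl
  · exact (Step.braid [] z a).eqv
  · exact (Step.braid [] z b).eqv.symm

theorem cons_append_eqv_of_far {c : ℕ} {y : List ℕ} (h : ∀ x ∈ y, x + 2 ≤ c ∨ c + 2 ≤ x)
    (z : List ℕ) : c :: (y ++ z) ~~ y ++ c :: z := by
  induction y with
  | nil => exact .rfl
  | cons b y ih =>
    have hb : c + 2 ≤ b ∨ b + 2 ≤ c := (h b (by simp)).symm
    exact (eqv_swap hb _).trans ((ih fun x hx => h x (by simp [hx])).cons b)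

/-- `a \ b`, the complement of `a` in the least common right multiple
`a (a \ b) = b (b \ a)` of the letters `a` and `b`. -/
def letterCompl (a b : ℕ) : List ℕ :=
  if a = b then [] else if a + 1 = b ∨ b + 1 = a then [b, a] else [b]

@[simp] theorem letterCompl_self (a : ℕ) : letterCompl a a = [] := by simp [letterCompl]

theorem letterCompl_of_adj {a b : ℕ} (h : a + 1 = b ∨ b + 1 = a) : letterCompl a b = [b, a] := by
  rw [letterCompl, if_neg (by omega), if_pos h]

theorem letterCompl_of_far {a b : ℕ} (h : a + 2 ≤ b ∨ b + 2 ≤ a) : letterCompl a b = [b] := by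
  rw [letterCompl, if_neg (by omega), if_neg (by omega)]

theorem length_letterCompl_comm (a b : ℕ) :
    (letterCompl a b).length = (letterCompl b a).length := by
  unfold letterCompl
  split_ifs <;> first | rfl | omega

theorem mem_letterCompl {a b x : ℕ} (hx : x ∈ letterCompl a b) : x = a ∨ x = b := by
  unfold letterCompl at hx
  split_ifs at hx <;> simp at hx <;> tauto

theorem adj_or_far {a b : ℕ} (h : a ≠ b) : (a + 1 = b ∨ b + 1 = a) ∨ (a + 2 ≤ b ∨ b + 2 ≤ a) := by
  omega

theorem cons_letterCompl_eqv (a b : ℕ) : a :: letterCompl a b ~~ b :: letterCompl b a := by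
  obtain rfl | hab := eq_or_ne a b
  · exact .rfl
  rcases adj_or_far hab with h | h
  · simpa [letterCompl_of_adj h, letterCompl_of_adj h.symm] using eqv_braid h []
  · simpa [letterCompl_of_far h, letterCompl_of_far h.symm] using eqv_swap h []

theorem Step.cons_cases {a : ℕ} {u w : List ℕ} (h : Step (a :: u) w) :
    ∃ b v, w = b :: v ∧
      ((a = b ∧ u ~~ v) ∨ (a ≠ b ∧ ∃ r, u = letterCompl a b ++ r ∧ v = letterCompl b a ++ r)) := by
  generalize hw : a :: u = w₀ at h
  cases h with
  | swap p q hij =>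
    rcases p with _ | ⟨d, p⟩
    · simp only [List.nil_append, List.cons.injEq] at hw
      obtain ⟨rfl, rfl⟩ := hw
      refine ⟨_, _, rfl, .inr ⟨by omega, q, ?_, ?_⟩⟩
      · rw [letterCompl_of_far (.inl hij)]; rfl
      · rw [letterCompl_of_far (.inr hij)]; rfl
    · simp only [List.cons_append, List.cons.injEq] at hw
      obtain ⟨rfl, rfl⟩ := hw
      exact ⟨_, _, rfl, .inl ⟨rfl, (Step.swap p q hij).eqv⟩⟩
  | braid p q i =>
    rcases p with _ | ⟨d, p⟩
    · simp only [List.nil_append, List.cons.injEq] at hw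
      obtain ⟨rfl, rfl⟩ := hw
      refine ⟨_, _, rfl, .inr ⟨by omega, q, ?_, ?_⟩⟩
      · rw [letterCompl_of_adj (.inl rfl)]; rfl
      · rw [letterCompl_of_adj (.inr rfl)]; rfl
    · simp only [List.cons_append, List.cons.injEq] at hw
      obtain ⟨rfl, rfl⟩ := hw
      exact ⟨_, _, rfl, .inl ⟨rfl, (Step.braid p q i).eqv⟩⟩

theorem symmGen_step_cons_cases {a : ℕ} {u w : List ℕ} (h : SymmGen Step (a :: u) w) :
    ∃ b v, w = b :: v ∧
      ((a = b ∧ u ~~ v) ∨ (a ≠ b ∧ ∃ r, u = letterCompl a b ++ r ∧ v = letterCompl b a ++ r)) := by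
  rcases h with h | h
  · exact h.cons_cases
  · obtain ⟨b, v, rfl⟩ : ∃ b v, w = b :: v := by
      cases w with
      | nil => simpa using h.length_eq
      | cons b v => exact ⟨b, v, rfl⟩
    obtain ⟨_, _, he, h⟩ := h.cons_cases
    obtain ⟨rfl, rfl⟩ := List.cons.inj he
    exact ⟨b, v, rfl,
      h.imp (fun h => ⟨h.1.symm, h.2.symm⟩) fun ⟨hne, r, h₁, h₂⟩ => ⟨hne.symm, r, h₂, h₁⟩⟩

/-- Garside's lemma for tails `u` shorter than `ℓ`. -/
def GarsideBelow (ℓ : ℕ) : Prop :=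
  ∀ ⦃a b : ℕ⦄ ⦃u v : List ℕ⦄, u.length < ℓ → a :: u ~~ b :: v →
    ∃ t, u ~~ letterCompl a b ++ t ∧ v ~~ letterCompl b a ++ t

namespace GarsideBelow

variable {ℓ : ℕ} (H : GarsideBelow ℓ) {a b c : ℕ} {r s u v : List ℕ}
include H

theorem of_far (hab : a + 2 ≤ b ∨ b + 2 ≤ a) (hl : u.length < ℓ) (h : a :: u ~~ b :: v) :
    ∃ t, u ~~ b :: t ∧ v ~~ a :: t := by
  simpa [letterCompl_of_far hab, letterCompl_of_far hab.symm] using H hl h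

theorem of_adj (hab : a + 1 = b ∨ b + 1 = a) (hl : u.length < ℓ) (h : a :: u ~~ b :: v) :
    ∃ t, u ~~ b :: a :: t ∧ v ~~ a :: b :: t := by
  simpa [letterCompl_of_adj hab, letterCompl_of_adj hab.symm] using H hl h

theorem cancel_cons (hl : u.length < ℓ) (h : a :: u ~~ a :: v) : u ~~ v := by
  obtain ⟨t, hu, hv⟩ := H hl h
  simp only [letterCompl_self, List.nil_append] at hu hv
  exact hu.trans hv.symm

theorem cancel_append {p : List ℕ} (hl : (p ++ u).length ≤ ℓ) (h : p ++ u ~~ p ++ v) : u ~~ v := by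
  induction p with
  | nil => simpa using h
  | cons x p ih =>
    simp only [List.cons_append, List.length_cons] at h hl
    exact ih (by omega) (H.cancel_cons (by omega) h)

theorem cube_adj_adj (hac : a + 1 = c ∨ c + 1 = a) (hbc : b + 1 = c ∨ c + 1 = b)
    (hab : a + 2 ≤ b ∨ b + 2 ≤ a) (hl : r.length + 2 ≤ ℓ) (h : a :: c :: r ~~ b :: c :: s) :
    ∃ t, c :: a :: r ~~ b :: t ∧ c :: b :: s ~~ a :: t := by
  have hs : r.length = s.length := by simpa using h.length_eq
  obtain ⟨t₂, h₂, h₃⟩ := H.of_far hab (by simp only [List.length_cons]; omega) h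
  obtain ⟨t₃, h₄, h₅⟩ := H.of_adj hbc.symm (by omega) h₂
  obtain ⟨t₄, h₆, h₇⟩ := H.of_adj hac.symm (by omega) (h₃.trans (h₅.cons a))
  have h₃₄ : t₃.length + 2 = r.length := by simpa using h₄.length_eq.symm
  have h₈₉ : b :: t₃ ~~ a :: t₄ := H.cancel_cons (by simp only [List.length_cons]; omega) h₇
  obtain ⟨t₅, h₈, h₉⟩ := H.of_far hab.symm (by omega) h₈₉
  refine ⟨c :: b :: a :: c :: t₅, ?_, ?_⟩
  · calc c :: a :: r ~~ c :: a :: b :: c :: a :: t₅ :=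
          ((h₄.trans ((h₈.cons c).cons b)).cons a).cons c
      _ ~~ c :: b :: a :: c :: a :: t₅ := (eqv_swap hab _).cons c
      _ ~~ c :: b :: c :: a :: c :: t₅ := ((eqv_braid hac _).cons b).cons c
      _ ~~ b :: c :: b :: a :: c :: t₅ := eqv_braid hbc.symm _
  · calc c :: b :: s ~~ c :: b :: a :: c :: b :: t₅ :=
          ((h₆.trans ((h₉.cons c).cons a)).cons b).cons c
      _ ~~ c :: a :: b :: c :: b :: t₅ := (eqv_swap hab.symm _).cons c
      _ ~~ c :: a :: c :: b :: c :: t₅ := ((eqv_braid hbc _).cons a).cons c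
      _ ~~ a :: c :: a :: b :: c :: t₅ := eqv_braid hac.symm _
      _ ~~ a :: c :: b :: a :: c :: t₅ := ((eqv_swap hab _).cons c).cons a

theorem cube_adj_far_adj (hac : a + 1 = c ∨ c + 1 = a) (hbc : b + 2 ≤ c ∨ c + 2 ≤ b)
    (hab : a + 1 = b ∨ b + 1 = a) (hl : r.length + 2 ≤ ℓ) (h : a :: c :: r ~~ b :: s) :
    ∃ t, c :: a :: r ~~ b :: a :: t ∧ c :: s ~~ a :: b :: t := by
  obtain ⟨t₂, h₂, h₃⟩ := H.of_adj hab (by simp only [List.length_cons]; omega) h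
  obtain ⟨t₃, h₄, h₅⟩ := H.of_far hbc.symm (by omega) h₂
  have h₂₃ : t₂.length + 1 = r.length := by simpa using h₂.length_eq.symm
  obtain ⟨t₄, h₆, h₇⟩ := H.of_adj hac (by omega) h₅
  refine ⟨c :: a :: b :: t₄, ?_, ?_⟩
  · calc c :: a :: r ~~ c :: a :: b :: a :: c :: t₄ := ((h₄.trans (h₇.cons b)).cons a).cons c
      _ ~~ c :: b :: a :: b :: c :: t₄ := (eqv_braid hab _).cons c
      _ ~~ b :: c :: a :: b :: c :: t₄ := eqv_swap hbc.symm _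
      _ ~~ b :: c :: a :: c :: b :: t₄ := (((eqv_swap hbc _).cons a).cons c).cons b
      _ ~~ b :: a :: c :: a :: b :: t₄ := (eqv_braid hac.symm _).cons b
  · calc c :: s ~~ c :: a :: b :: c :: a :: t₄ := (h₃.trans ((h₆.cons b).cons a)).cons c
      _ ~~ c :: a :: c :: b :: a :: t₄ := ((eqv_swap hbc _).cons a).cons c
      _ ~~ a :: c :: a :: b :: a :: t₄ := eqv_braid hac.symm _
      _ ~~ a :: c :: b :: a :: b :: t₄ := ((eqv_braid hab _).cons c).cons a
      _ ~~ a :: b :: c :: a :: b :: t₄ := (eqv_swap hbc.symm _).cons a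

theorem cube_adj_far_far (hac : a + 1 = c ∨ c + 1 = a) (hbc : b + 2 ≤ c ∨ c + 2 ≤ b)
    (hab : a + 2 ≤ b ∨ b + 2 ≤ a) (hl : r.length + 2 ≤ ℓ) (h : a :: c :: r ~~ b :: s) :
    ∃ t, c :: a :: r ~~ b :: t ∧ c :: s ~~ a :: t := by
  obtain ⟨t₂, h₂, h₃⟩ := H.of_far hab (by simp only [List.length_cons]; omega) h
  obtain ⟨t₃, h₄, h₅⟩ := H.of_far hbc.symm (by omega) h₂
  refine ⟨c :: a :: t₃, ?_, ?_⟩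
  · calc c :: a :: r ~~ c :: a :: b :: t₃ := (h₄.cons a).cons c
      _ ~~ c :: b :: a :: t₃ := (eqv_swap hab _).cons c
      _ ~~ b :: c :: a :: t₃ := eqv_swap hbc.symm _
  · calc c :: s ~~ c :: a :: c :: t₃ := (h₃.trans (h₅.cons a)).cons c
      _ ~~ a :: c :: a :: t₃ := eqv_braid hac.symm _

theorem cube_far_far (hac : a + 2 ≤ c ∨ c + 2 ≤ a) (hbc : b + 2 ≤ c ∨ c + 2 ≤ b)
    (hl : r.length + 1 ≤ ℓ) (h : a :: r ~~ b :: s) :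
    ∃ t, c :: r ~~ letterCompl a b ++ t ∧ c :: s ~~ letterCompl b a ++ t := by
  obtain ⟨t, hr, hs⟩ := H (by omega) h
  have hfar : ∀ {x y}, (x + 2 ≤ c ∨ c + 2 ≤ x) → (y + 2 ≤ c ∨ c + 2 ≤ y) →
      ∀ z ∈ letterCompl x y, z + 2 ≤ c ∨ c + 2 ≤ z := fun hx hy z hz => by
    rcases mem_letterCompl hz with rfl | rfl <;> assumption
  exact ⟨c :: t, (hr.cons c).trans (cons_append_eqv_of_far (hfar hac hbc) t),
    (hs.cons c).trans (cons_append_eqv_of_far (hfar hbc hac) t)⟩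

theorem cube_of_adj (hac : a + 1 = c ∨ c + 1 = a) (hab : a ≠ b) (hbc : b ≠ c)
    (hl : (letterCompl c a ++ r).length ≤ ℓ) (h : letterCompl c a ++ r ~~ letterCompl c b ++ s) :
    ∃ t, letterCompl a c ++ r ~~ letterCompl a b ++ t ∧
      letterCompl b c ++ s ~~ letterCompl b a ++ t := by
  simp only [letterCompl_of_adj hac, letterCompl_of_adj hac.symm, List.cons_append,
    List.nil_append, List.length_cons] at h hl ⊢
  rcases adj_or_far hbc with hbc | hbc
  · have hab : a + 2 ≤ b ∨ b + 2 ≤ a := by omega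
    simpa [letterCompl_of_adj hbc, letterCompl_of_adj hbc.symm, letterCompl_of_far hab,
      letterCompl_of_far hab.symm] using H.cube_adj_adj hac hbc hab (by omega)
        (by simpa [letterCompl_of_adj hbc.symm] using h)
  · rw [letterCompl_of_far hbc.symm] at h
    rw [letterCompl_of_far hbc]
    rcases adj_or_far hab with hab | hab
    · simpa [letterCompl_of_adj hab, letterCompl_of_adj hab.symm]
        using H.cube_adj_far_adj hac hbc hab (by omega) h
    · simpa [letterCompl_of_far hab, letterCompl_of_far hab.symm]
        using H.cube_adj_far_far hac hbc hab (by omega) h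

theorem cube (hab : a ≠ b) (hac : a ≠ c) (hbc : b ≠ c)
    (hl : (letterCompl c a ++ r).length ≤ ℓ) (h : letterCompl c a ++ r ~~ letterCompl c b ++ s) :
    ∃ t, letterCompl a c ++ r ~~ letterCompl a b ++ t ∧
      letterCompl b c ++ s ~~ letterCompl b a ++ t := by
  rcases adj_or_far hac with hac' | hac'
  · exact H.cube_of_adj hac' hab hbc hl h
  rcases adj_or_far hbc with hbc' | hbc'
  · obtain ⟨t, h₁, h₂⟩ := H.cube_of_adj hbc' hab.symm hac (h.length_eq ▸ hl) h.symm
    exact ⟨t, h₂, h₁⟩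
  simp only [letterCompl_of_far hac', letterCompl_of_far hac'.symm, letterCompl_of_far hbc',
    letterCompl_of_far hbc'.symm, List.cons_append, List.nil_append, List.length_cons] at h hl ⊢
  exact H.cube_far_far hac' hbc' hl h

end GarsideBelow

theorem garsideBelow_succ {ℓ : ℕ} (H : GarsideBelow ℓ) : GarsideBelow (ℓ + 1) := by
  intro a b u v hl h
  generalize hw : a :: u = w at h
  induction h using ReflTransGen.head_induction_on generalizing a u with
  | refl =>
    obtain ⟨rfl, rfl⟩ := List.cons.inj hw
    exact ⟨u, by simp [WordEqv.rfl], by simp [WordEqv.rfl]⟩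
  | head hstep _ ih =>
    subst hw
    obtain ⟨c, s, rfl, ⟨rfl, hus⟩ | ⟨hac, r, rfl, rfl⟩⟩ := symmGen_step_cons_cases hstep
    · obtain ⟨t, hs, hv⟩ := ih (by simpa [← hus.length_eq] using hl) rfl
      exact ⟨t, hus.trans hs, hv⟩
    have hl' : (letterCompl c a ++ r).length ≤ ℓ := by
      simp only [List.length_append, length_letterCompl_comm c a] at hl ⊢; omega
    obtain ⟨t₁, hA, hB⟩ := ih (by omega) rfl
    obtain rfl | hbc := eq_or_ne b c
    · simp only [letterCompl_self, List.nil_append] at hA hB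
      exact ⟨r, .rfl, hB.trans hA.symm⟩
    obtain rfl | hab := eq_or_ne a b
    · simp only [letterCompl_self, List.nil_append] at hA hB ⊢
      exact ⟨letterCompl a c ++ t₁, (H.cancel_append hl' hA).append_left _, hB⟩
    obtain ⟨t, h₁, h₂⟩ := H.cube hab hac hbc hl' hA
    exact ⟨t, h₁, hB.trans h₂⟩

theorem garsideBelow (ℓ : ℕ) : GarsideBelow ℓ := by
  induction ℓ with
  | zero => intro _ _ _ _ h; simp at h
  | succ ℓ ih => exact garsideBelow_succ ih

theorem exists_eqv_letterCompl_append {a b : ℕ} {u v : List ℕ} (h : a :: u ~~ b :: v) :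
    ∃ t, u ~~ letterCompl a b ++ t ∧ v ~~ letterCompl b a ++ t :=
  garsideBelow (u.length + 1) (by omega) h

theorem WordEqv.cancel_left {p u v : List ℕ} (h : p ++ u ~~ p ++ v) : u ~~ v :=
  (garsideBelow (p ++ u).length).cancel_append le_rfl h

theorem exists_common_multiple {p : ℕ → Prop} {U X Y Z : List ℕ} (hU : ∀ x ∈ U, p x)
    (hY : ∀ x ∈ Y, p x) (h : U ++ X ~~ Y ++ Z) :
    ∃ P Q e, U ++ P ~~ Y ++ Q ∧ (∀ x ∈ P, p x) ∧ (∀ x ∈ Q, p x) ∧ X ~~ P ++ e ∧ Z ~~ Q ++ e := by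
  match U, Y, hU, hY, h with
  | [], Y, _, hY, h => exact ⟨Y, [], Z, by simp [WordEqv.rfl], hY, by simp, h, .rfl⟩
  | a :: U, [], hU, _, h => exact ⟨[], a :: U, X, by simp [WordEqv.rfl], by simp, hU, .rfl, h.symm⟩
  | a :: U, b :: Y, hU, hY, h =>
    obtain ⟨t, h₁, h₂⟩ := exists_eqv_letterCompl_append h
    have hC : ∀ {x y}, p x → p y → ∀ z ∈ letterCompl x y, p z := fun hx hy z hz => by
      rcases mem_letterCompl hz with rfl | rfl <;> assumption
    have ha : p a := hU a (by simp)
    have hb : p b := hY b (by simp)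
    obtain ⟨P₁, Q₁, e₁, hPQ₁, hP₁, hQ₁, hX, ht⟩ :=
      exists_common_multiple (fun x hx => hU x (by simp [hx])) (hC ha hb) h₁
    obtain ⟨P₂, Q₂, e₂, hPQ₂, hP₂, hQ₂, hZ, he⟩ :=
      exists_common_multiple (Y := letterCompl b a ++ Q₁) (Z := e₁)
        (fun x hx => hY x (by simp [hx])) (List.forall_mem_append.mpr ⟨hC hb ha, hQ₁⟩)
        (h₂.trans (by simpa using ht.append_left (letterCompl b a)))
    refine ⟨P₁ ++ Q₂, P₂, e₂, ?_, List.forall_mem_append.mpr ⟨hP₁, hQ₂⟩, hP₂, ?_, hZ⟩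
    · calc a :: U ++ (P₁ ++ Q₂) ~~ a :: letterCompl a b ++ (Q₁ ++ Q₂) := by
            simpa using (hPQ₁.append_right Q₂).cons a
        _ ~~ b :: letterCompl b a ++ (Q₁ ++ Q₂) := (cons_letterCompl_eqv a b).append_right _
        _ ~~ b :: Y ++ P₂ := by simpa using hPQ₂.symm.cons b
    · simpa using hX.trans (he.append_left P₁)
termination_by (U ++ X).length
decreasing_by
  · simp
  · have := h.length_eq; simp at this ⊢; omega

theorem exists_max_prefix (A : Set ℕ) (W : List ℕ) :
    ∃ v, (∀ x ∈ v, x ∈ A) ∧ (∃ z, W ~~ v ++ z) ∧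
      ∀ v₀, (∀ x ∈ v₀, x ∈ A) → (∃ z, W ~~ v₀ ++ z) → ∃ d, v ~~ v₀ ++ d := by
  set S := {v : List ℕ | (∀ x ∈ v, x ∈ A) ∧ ∃ z, W ~~ v ++ z}
  have hbdd : BddAbove (List.length '' S) := ⟨W.length, by
    rintro _ ⟨v, ⟨-, z, hz⟩, rfl⟩
    simp [hz.length_eq]⟩
  have hne : (List.length '' S).Nonempty := ⟨0, [], ⟨by simp, W, .rfl⟩, rfl⟩
  obtain ⟨v, ⟨hvA, z, hz⟩, hv⟩ := Nat.sSup_mem hne hbdd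
  refine ⟨v, hvA, ⟨z, hz⟩, fun v₀ hv₀ ⟨z₀, hz₀⟩ => ?_⟩
  obtain ⟨P, Q, e, hPQ, hP, -, hz₀e, -⟩ := exists_common_multiple hv₀ hvA (hz₀.symm.trans hz)
  have hv₀P : v₀ ++ P ∈ S :=
    ⟨List.forall_mem_append.mpr ⟨hv₀, hP⟩, e, by simpa using hz₀.trans (hz₀e.append_left v₀)⟩
  have hmax : (v₀ ++ P).length ≤ v.length := hv ▸ le_csSup hbdd ⟨_, hv₀P, rfl⟩
  have hQ : Q = [] := List.eq_nil_of_length_eq_zero (by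
    have := hPQ.length_eq
    simp only [List.length_append] at this hmax
    omega)
  exact ⟨P, by simpa [hQ] using hPQ.symm⟩

theorem exists_max_suffix (A : Set ℕ) (W : List ℕ) :
    ∃ v, (∀ x ∈ v, x ∈ A) ∧ (∃ z, W ~~ z ++ v) ∧
      ∀ v₀, (∀ x ∈ v₀, x ∈ A) → (∃ z, W ~~ z ++ v₀) → ∃ d, v ~~ d ++ v₀ := by
  obtain ⟨v, hvA, ⟨z, hz⟩, hv⟩ := exists_max_prefix A W.reverse
  refine ⟨v.reverse, by simpa using hvA, ⟨z.reverse, ?_⟩, fun v₀ hv₀ ⟨z₀, hz₀⟩ => ?_⟩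
  · rw [← WordEqv.reverse_iff]; simpa using hz
  · obtain ⟨d, hd⟩ := hv v₀.reverse (by simpa using hv₀)
      ⟨z₀.reverse, by rw [← List.reverse_append, WordEqv.reverse_iff]; exact hz₀⟩
    exact ⟨d.reverse, by rw [← WordEqv.reverse_iff]; simpa using hd⟩

/-- The word of `Δ_m = (σ_1 ⋯ σ_{m-1}) Δ_{m-1}`. -/
def deltaWord : ℕ → List ℕ
  | 0 => []
  | m + 1 => List.range m ++ deltaWord m

theorem add_two_le_of_mem_deltaWord {x : ℕ} : ∀ {m : ℕ}, x ∈ deltaWord m → x + 2 ≤ m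
  | 0, h => by simp [deltaWord] at h
  | m + 1, h => by
    rcases List.mem_append.mp h with h | h
    · have := List.mem_range.mp h; omega
    · have := add_two_le_of_mem_deltaWord h; omega

theorem range_append_singleton_eqv {i : ℕ} : ∀ {m : ℕ}, i + 1 < m →
    List.range m ++ [i] ~~ (i + 1) :: List.range m
  | 0, h => by omega
  | m + 1, h => by
    rw [List.range_succ]
    obtain h | rfl : i + 1 < m ∨ i + 1 = m := by omega
    · calc List.range m ++ [m] ++ [i] ~~ List.range m ++ [i] ++ [m] := by
            simpa using (eqv_swap (.inr (by omega : i + 2 ≤ m)) []).append_left (List.range m)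
        _ ~~ (i + 1) :: List.range m ++ [m] := (range_append_singleton_eqv h).append_right _
    · have hfar : ∀ x ∈ List.range i, x + 2 ≤ i + 1 ∨ i + 1 + 2 ≤ x := fun x hx => by
        have := List.mem_range.mp hx; omega
      calc List.range (i + 1) ++ [i + 1] ++ [i] = List.range i ++ i :: (i + 1) :: i :: [] := by
            simp [List.range_succ]
        _ ~~ List.range i ++ (i + 1) :: i :: (i + 1) :: [] :=
            (eqv_braid (.inl rfl) []).append_left _
        _ ~~ (i + 1) :: (List.range i ++ [i, i + 1]) := (cons_append_eqv_of_far hfar _).symm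
        _ = (i + 1) :: (List.range (i + 1) ++ [i + 1]) := by simp [List.range_succ]

theorem deltaWord_succ_eqv : ∀ m : ℕ, deltaWord (m + 1) ~~ deltaWord m ++ (List.range m).reverse
  | 0 => .rfl
  | m + 1 => by
    have hfar : ∀ x ∈ deltaWord m, x + 2 ≤ m ∨ m + 2 ≤ x := fun x hx =>
      .inl (add_two_le_of_mem_deltaWord hx)
    calc deltaWord (m + 2) ~~ List.range (m + 1) ++ (deltaWord m ++ (List.range m).reverse) :=
          (deltaWord_succ_eqv m).append_left _
      _ = List.range m ++ (m :: (deltaWord m ++ (List.range m).reverse)) := by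
          simp [List.range_succ]
      _ ~~ List.range m ++ (deltaWord m ++ m :: (List.range m).reverse) :=
          (cons_append_eqv_of_far hfar _).append_left _
      _ = deltaWord (m + 1) ++ (List.range (m + 1)).reverse := by
          simp [deltaWord, List.range_succ]

/-- The flip `σ_i Δ_m = Δ_m σ_{m-i}` on words. -/
theorem cons_deltaWord_eqv {a : ℕ} : ∀ {m : ℕ}, a + 2 ≤ m →
    a :: deltaWord m ~~ deltaWord m ++ [m - 2 - a]
  | 0, h => by omega
  | m + 1, h => by
    rcases a with _ | a
    · obtain rfl | hm : m = 1 ∨ 2 ≤ m := by omega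
      · exact .rfl
      have hrev : (m - 2) :: (List.range m).reverse ~~ (List.range m).reverse ++ [m - 1] := by
        have := (range_append_singleton_eqv (i := m - 2) (m := m) (by omega)).reverse
        simpa [show m - 2 + 1 = m - 1 by omega] using this
      calc 0 :: deltaWord (m + 1) ~~ 0 :: (deltaWord m ++ (List.range m).reverse) :=
            (deltaWord_succ_eqv m).cons 0
        _ ~~ deltaWord m ++ [m - 2] ++ (List.range m).reverse :=
            (cons_deltaWord_eqv (by omega)).append_right _
        _ ~~ deltaWord m ++ (List.range m).reverse ++ [m - 1] := by
            simpa using hrev.append_left (deltaWord m)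
        _ ~~ deltaWord (m + 1) ++ [m + 1 - 2 - 0] := by
            simpa [show m + 1 - 2 = m - 1 by omega] using (deltaWord_succ_eqv m).symm.append_right _
    · calc (a + 1) :: (List.range m ++ deltaWord m) ~~ List.range m ++ a :: deltaWord m := by
            simpa using
              (range_append_singleton_eqv (i := a) (m := m) (by omega)).symm.append_right _
        _ ~~ List.range m ++ (deltaWord m ++ [m - 2 - a]) :=
            (cons_deltaWord_eqv (by omega)).append_left _
        _ = deltaWord (m + 1) ++ [m + 1 - 2 - (a + 1)] := by
            simp only [deltaWord, List.append_assoc]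
            congr 3
            omega

theorem append_deltaWord_eqv {m : ℕ} :
    ∀ {w : List ℕ}, (∀ x ∈ w, x + 2 ≤ m) → w ++ deltaWord m ~~ deltaWord m ++ w.map (m - 2 - ·)
  | [], _ => by simpa using WordEqv.rfl
  | a :: w, hw => by
    rw [List.forall_mem_cons] at hw
    calc a :: (w ++ deltaWord m) ~~ a :: (deltaWord m ++ w.map (m - 2 - ·)) :=
          (append_deltaWord_eqv hw.2).cons a
      _ ~~ deltaWord m ++ [m - 2 - a] ++ w.map (m - 2 - ·) :=
          (cons_deltaWord_eqv hw.1).append_right _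
      _ = deltaWord m ++ (a :: w).map (m - 2 - ·) := by simp

theorem add_two_le_of_mem_map_sub {m : ℕ} {w : List ℕ} (hw : ∀ x ∈ w, x + 2 ≤ m) :
    ∀ x ∈ w.map (m - 2 - ·), x + 2 ≤ m := by
  intro x hx
  obtain ⟨y, hy, rfl⟩ := List.mem_map.mp hx
  have := hw y hy
  omega

theorem map_sub_map_sub {m : ℕ} {w : List ℕ} (hw : ∀ x ∈ w, x + 2 ≤ m) :
    (w.map (m - 2 - ·)).map (m - 2 - ·) = w := by
  rw [List.map_map]
  exact (List.map_congr_left fun x hx => by have := hw x hx; simp; omega).trans (List.map_id w)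

theorem append_deltaWord_sq_eqv {m : ℕ} {w : List ℕ} (hw : ∀ x ∈ w, x + 2 ≤ m) :
    w ++ (deltaWord m ++ deltaWord m) ~~ deltaWord m ++ deltaWord m ++ w := by
  calc w ++ (deltaWord m ++ deltaWord m) ~~ deltaWord m ++ w.map (m - 2 - ·) ++ deltaWord m := by
        simpa using (append_deltaWord_eqv hw).append_right (deltaWord m)
    _ ~~ deltaWord m ++ deltaWord m ++ w := by
        simpa [map_sub_map_sub hw] using
          (append_deltaWord_eqv (add_two_le_of_mem_map_sub hw)).append_left (deltaWord m)

theorem exists_deltaWord_eqv_cons {a : ℕ} : ∀ {m : ℕ}, a + 2 ≤ m → ∃ c, deltaWord m ~~ a :: c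
  | 0, h => by omega
  | m + 1, h => by
    rcases a with _ | a
    · obtain ⟨m, rfl⟩ : ∃ m', m = m' + 1 := ⟨m - 1, by omega⟩
      exact ⟨_, by simp only [deltaWord, List.range_succ_eq_map, List.cons_append]; exact .rfl⟩
    · obtain ⟨c, hc⟩ := exists_deltaWord_eqv_cons (a := a) (m := m) (by omega)
      refine ⟨List.range m ++ c, ?_⟩
      calc List.range m ++ deltaWord m ~~ List.range m ++ [a] ++ c := by
            simpa using hc.append_left (List.range m)
        _ ~~ (a + 1) :: List.range m ++ c :=
            (range_append_singleton_eqv (by omega)).append_right c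

theorem exists_deltaWord_sq_compl {m a : ℕ} (h : a + 2 ≤ m) :
    ∃ c, a :: c ~~ deltaWord m ++ deltaWord m ∧ c ++ [a] ~~ deltaWord m ++ deltaWord m := by
  obtain ⟨c, hc⟩ := exists_deltaWord_eqv_cons h
  refine ⟨c ++ deltaWord m, by simpa using (hc.append_right (deltaWord m)).symm, ?_⟩
  refine WordEqv.cancel_left (p := [a]) ?_
  calc [a] ++ (c ++ deltaWord m ++ [a]) ~~ deltaWord m ++ deltaWord m ++ [a] := by
        simpa using (hc.symm.append_right (deltaWord m)).append_right [a]
    _ ~~ [a] ++ (deltaWord m ++ deltaWord m) := (append_deltaWord_sq_eqv (by simpa)).symm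

def wordSetoid : Setoid (List ℕ) := ⟨WordEqv, ⟨WordEqv.refl, WordEqv.symm, WordEqv.trans⟩⟩

/-- The positive braid monoid on infinitely many strands. -/
def PosBraid : Type := Quotient wordSetoid

namespace PosBraid

def mk (w : List ℕ) : PosBraid := Quotient.mk wordSetoid w

theorem mk_eq_mk {u v : List ℕ} : mk u = mk v ↔ u ~~ v := Quotient.eq (r := wordSetoid)

def lmul (y : List ℕ) : PosBraid → PosBraid :=
  Quotient.map (y ++ ·) fun _ _ h => h.append_left y

theorem lmul_injective (y : List ℕ) : Function.Injective (lmul y) := by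
  rintro ⟨u⟩ ⟨v⟩ h
  exact mk_eq_mk.mpr (WordEqv.cancel_left (mk_eq_mk.mp h))

end PosBraid

def deltaSqShift (n : ℕ) : ℕ × PosBraid → ℕ × PosBraid :=
  Prod.map Nat.succ (PosBraid.lmul (deltaWord n ++ deltaWord n))

/-- The positive braids with `Δ_n²` inverted: the class of `(k, m)` stands for `Δ_n^{-2k} m`. -/
def DeltaFrac (n : ℕ) : Type := Quot fun p q : ℕ × PosBraid => q = deltaSqShift n p

namespace DeltaFrac

variable {n : ℕ}

def mk (n k : ℕ) (w : List ℕ) : DeltaFrac n := Quot.mk _ (k, PosBraid.mk w)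

theorem mk_congr {k : ℕ} {u v : List ℕ} (h : u ~~ v) : mk n k u = mk n k v := by
  rw [mk, mk, PosBraid.mk_eq_mk.mpr h]

theorem mk_succ_deltaWord_sq (k : ℕ) (w : List ℕ) :
    mk n (k + 1) (deltaWord n ++ deltaWord n ++ w) = mk n k w :=
  (Quot.sound (r := fun p q => q = deltaSqShift n p) (a := (k, PosBraid.mk w)) rfl).symm

theorem ind {P : DeltaFrac n → Prop} (h : ∀ k w, P (mk n k w)) (x : DeltaFrac n) : P x := by
  rcases x with ⟨k, ⟨w⟩⟩
  exact h k w

theorem perm_ext {σ τ : Equiv.Perm (DeltaFrac n)} (h : ∀ k w, σ (mk n k w) = τ (mk n k w)) :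
    σ = τ :=
  Equiv.ext (ind h)

theorem eqv_of_mk_eq {u v : List ℕ} (h : mk n 0 u = mk n 0 v) : u ~~ v := by
  obtain ⟨i, j, hij⟩ := Relation.EqvGen.exists_iterate_eq (Quot.eqvGen_exact h)
  simp only [deltaSqShift, Prod.map_iterate, Prod.map, Nat.succ_iterate, zero_add,
    Prod.mk.injEq] at hij
  obtain ⟨rfl, hij⟩ := hij
  exact PosBraid.mk_eq_mk.mp ((PosBraid.lmul_injective _).iterate i hij)

/-- Left multiplication by `Δ_n^{-2e} y`. -/
def mulLeft (y : List ℕ) (e : ℕ) (hy : ∀ x ∈ y, x + 2 ≤ n) : DeltaFrac n → DeltaFrac n :=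
  Quot.map (Prod.map (· + e) (PosBraid.lmul y)) <| by
    rintro ⟨k, ⟨w⟩⟩ _ rfl
    refine Prod.ext (Nat.succ_add k e) ?_
    show PosBraid.mk (y ++ (deltaWord n ++ deltaWord n ++ w)) =
      PosBraid.mk (deltaWord n ++ deltaWord n ++ (y ++ w))
    exact PosBraid.mk_eq_mk.mpr (by simpa using (append_deltaWord_sq_eqv hy).append_right w)

theorem mulLeft_mk (y : List ℕ) (e : ℕ) (hy : ∀ x ∈ y, x + 2 ≤ n) (k : ℕ) (w : List ℕ) :
    mulLeft y e hy (mk n k w) = mk n (k + e) (y ++ w) := rfl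

/-- Left multiplication by `σ_{a+1}`, inverted by `Δ_n^{-2} c` where `σ_{a+1} c = Δ_n²`. -/
noncomputable def letterPerm (n a : ℕ) (ha : a + 2 ≤ n) : Equiv.Perm (DeltaFrac n) :=
  have hc := (exists_deltaWord_sq_compl ha).choose_spec
  { toFun := mulLeft [a] 0 (by simpa)
    invFun := mulLeft (exists_deltaWord_sq_compl ha).choose 1 fun x hx => by
      rcases List.mem_append.mp (hc.1.mem_iff.mp (List.mem_cons_of_mem a hx)) with h | h <;>
        exact add_two_le_of_mem_deltaWord h
    left_inv := ind fun k w => by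
      simp only [mulLeft_mk, ← List.append_assoc]
      exact (mk_congr (hc.2.append_right w)).trans (mk_succ_deltaWord_sq k w)
    right_inv := ind fun k w =>
      (mk_congr (hc.1.append_right w)).trans (mk_succ_deltaWord_sq k w) }

theorem letterPerm_braidRels (n : ℕ) :
    ∀ r ∈ braidRels (n - 1),
      FreeGroup.lift (fun i : Fin (n - 1) => letterPerm n i (by omega)) r = 1 := by
  rintro r ⟨i, j, ⟨hij, rfl⟩ | ⟨hij, rfl⟩⟩ <;>
    simp only [map_mul, map_inv, FreeGroup.lift_apply_of, mul_inv_eq_iff_eq_mul]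
  · exact perm_ext fun k w => mk_congr (Step.swap [] w hij).eqv
  · exact perm_ext fun k w => mk_congr (by rw [hij]; exact (Step.braid [] w i).eqv)

end DeltaFrac

open DeltaFrac

noncomputable def toPerm (n : ℕ) : B n →* Equiv.Perm (DeltaFrac n) :=
  PresentedGroup.toGroup (letterPerm_braidRels n)

def evalPos (n : ℕ) (w : List ℕ) : B n := (w.map fun i => gen n (i + 1)).prod

@[simp] theorem evalPos_nil (n : ℕ) : evalPos n [] = 1 := rfl

@[simp] theorem evalPos_cons (n a : ℕ) (w : List ℕ) :
    evalPos n (a :: w) = gen n (a + 1) * evalPos n w := by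
  simp [evalPos]

@[simp] theorem evalPos_append (n : ℕ) (u w : List ℕ) :
    evalPos n (u ++ w) = evalPos n u * evalPos n w := by
  simp [evalPos]

theorem gen_succ {n i : ℕ} (h : i + 2 ≤ n) :
    gen n (i + 1) = PresentedGroup.of (⟨i, by omega⟩ : Fin (n - 1)) := by
  simp [gen, show i < n - 1 by omega]

theorem toPerm_evalPos {n : ℕ} {w : List ℕ} (hw : ∀ x ∈ w, x + 2 ≤ n) (k : ℕ) (u : List ℕ) :
    toPerm n (evalPos n w) (mk n k u) = mk n k (w ++ u) := by
  induction w with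
  | nil => rfl
  | cons a w ih =>
    rw [List.forall_mem_cons] at hw
    rw [evalPos_cons, map_mul, Equiv.Perm.mul_apply, ih hw.2, gen_succ hw.1, toPerm,
      PresentedGroup.toGroup.of]
    rfl

/-- Garside's embedding theorem: `B⁺_n` embeds in `B_n`. -/
theorem eqv_of_evalPos_eq {n : ℕ} {w w' : List ℕ} (hw : ∀ x ∈ w, x + 2 ≤ n)
    (hw' : ∀ x ∈ w', x + 2 ≤ n) (h : evalPos n w = evalPos n w') : w ~~ w' := by
  have := congrArg (fun g => toPerm n g (mk n 0 [])) h
  simp only [toPerm_evalPos hw, toPerm_evalPos hw', List.append_nil] at this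
  exact eqv_of_mk_eq this

theorem gen_succ_mul_comm {n i j : ℕ} (hij : i + 2 ≤ j) (hj : j + 2 ≤ n) :
    gen n (i + 1) * gen n (j + 1) = gen n (j + 1) * gen n (i + 1) := by
  simp only [gen_succ (by omega : i + 2 ≤ n), gen_succ hj, PresentedGroup.of, ← map_mul]
  exact PresentedGroup.mk_eq_mk_of_mul_inv_mem ⟨⟨i, by omega⟩, ⟨j, by omega⟩, .inl ⟨hij, by group⟩⟩

theorem gen_succ_braid {n i : ℕ} (hi : i + 3 ≤ n) :
    gen n (i + 1) * gen n (i + 2) * gen n (i + 1) =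
      gen n (i + 2) * gen n (i + 1) * gen n (i + 2) := by
  simp only [gen_succ (by omega : i + 2 ≤ n), gen_succ (by omega : i + 1 + 2 ≤ n),
    PresentedGroup.of, ← map_mul]
  exact PresentedGroup.mk_eq_mk_of_mul_inv_mem
    ⟨⟨i, by omega⟩, ⟨i + 1, by omega⟩, .inr ⟨rfl, by group⟩⟩

theorem Step.evalPos_eq {n : ℕ} {w w' : List ℕ} (h : Step w w') (hw : ∀ x ∈ w, x + 2 ≤ n) :
    evalPos n w = evalPos n w' := by
  cases h with
  | swap u v hij =>
    have := gen_succ_mul_comm hij (hw _ (by simp))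
    simp only [evalPos_append, evalPos_cons, ← mul_assoc, this]
  | braid u v i =>
    have := gen_succ_braid (n := n) (i := i) (by have := hw (i + 1) (by simp); omega)
    simp only [evalPos_append, evalPos_cons, ← mul_assoc, this]

theorem evalPos_eq_of_eqv {n : ℕ} {w w' : List ℕ} (h : w ~~ w') (hw : ∀ x ∈ w, x + 2 ≤ n) :
    evalPos n w = evalPos n w' := by
  induction h with
  | refl => rfl
  | tail h₁ h₂ ih =>
    have hw' : ∀ x ∈ _, x + 2 ≤ n := fun x hx => hw x ((WordEqv.mem_iff h₁).mpr hx)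
    refine ih.trans (h₂.elim (fun h => h.evalPos_eq hw') fun h => (h.evalPos_eq ?_).symm)
    exact fun x hx => hw' x (h.mem_iff.mp hx)

theorem coe_Bplus (n k : ℕ) : (Bplus n k : Set (B n)) = evalPos n '' {w | ∀ j ∈ w, j + 2 ≤ k} := by
  have hgens : {x | ∃ i, 1 ≤ i ∧ i + 1 ≤ k ∧ x = gen n i} =
      (fun j => gen n (j + 1)) '' {j | j + 2 ≤ k} := by
    ext x
    constructor
    · rintro ⟨i, h₁, h₂, rfl⟩
      exact ⟨i - 1, show i - 1 + 2 ≤ k by omega, show gen n (i - 1 + 1) = _ by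
        rw [Nat.sub_add_cancel h₁]⟩
    · rintro ⟨j, hj, rfl⟩
      exact ⟨j + 1, by omega, hj, rfl⟩
  rw [Bplus, Submonoid.closure_eq_image_prod, hgens, ← Set.image_list_map, Set.image_image]
  rfl

theorem mem_Bplus_iff {n k : ℕ} {x : B n} :
    x ∈ Bplus n k ↔ ∃ w, (∀ j ∈ w, j + 2 ≤ k) ∧ evalPos n w = x := by
  rw [← SetLike.mem_coe, coe_Bplus]
  rfl

theorem deltaWord_succ_eq_flatten : ∀ m : ℕ,
    deltaWord (m + 1) = ((List.range m).reverse.map fun j => List.range (j + 1)).flatten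
  | 0 => rfl
  | m + 1 => by
    rw [deltaWord, deltaWord_succ_eq_flatten m]
    simp [List.range_succ]

theorem delta_eq_evalPos (n m : ℕ) : delta n m = evalPos n (deltaWord m) := by
  have hrow (j : ℕ) : ((List.range' 1 j).map (gen n)).prod = evalPos n (List.range j) := by
    simp [evalPos, List.range'_eq_map_range, Function.comp_def, Nat.add_comm]
  rcases m with _ | m
  · rfl
  · simp [delta, deltaWord_succ_eq_flatten, hrow, evalPos, List.map_flatten, List.prod_flatten,
      Function.comp_def]

theorem flip_succ (n k : ℕ) (x : B n) : flip n (k + 1) x = flip n 1 (flip n k x) := by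
  simp only [flip]
  group

theorem flip_one_evalPos {n : ℕ} {w : List ℕ} (hw : ∀ x ∈ w, x + 2 ≤ n) :
    flip n 1 (evalPos n w) = evalPos n (w.map (n - 2 - ·)) := by
  have hrange : ∀ x ∈ w.map (n - 2 - ·) ++ deltaWord n, x + 2 ≤ n :=
    List.forall_mem_append.mpr
      ⟨add_two_le_of_mem_map_sub hw, fun x hx => add_two_le_of_mem_deltaWord hx⟩
  have h := evalPos_eq_of_eqv (append_deltaWord_eqv (add_two_le_of_mem_map_sub hw)) hrange
  rw [map_sub_map_sub hw, evalPos_append, evalPos_append] at h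
  rw [flip, pow_one, delta_eq_evalPos, ← h, mul_inv_cancel_right]

/-- Letter `j` stands for `σ_{j+1}`, and `φ_n(σ_i) = σ_{n-i}`. -/
def flipAlphabet (n : ℕ) : ℕ → Set ℕ
  | 0 => {j | j + 3 ≤ n}
  | k + 1 => (n - 2 - ·) '' flipAlphabet n k

theorem add_two_le_of_mem_flipAlphabet {n : ℕ} : ∀ {k j : ℕ}, j ∈ flipAlphabet n k → j + 2 ≤ n
  | 0, j, h => by have : j + 3 ≤ n := h; omega
  | k + 1, _, ⟨j, hj, rfl⟩ => by
    have := add_two_le_of_mem_flipAlphabet hj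
    show n - 2 - j + 2 ≤ n
    omega

theorem flipSet_eq (n : ℕ) : ∀ k : ℕ,
    flipSet n k = evalPos n '' {w | ∀ j ∈ w, j ∈ flipAlphabet n k}
  | 0 => by
    have h0 : flip n 0 = id := funext fun x => by simp [flip]
    rw [flipSet, h0, Set.image_id, coe_Bplus]
    congr 1
    ext w
    exact forall₂_congr fun j _ => show j + 2 ≤ n - 1 ↔ j + 3 ≤ n by omega
  | k + 1 => by
    have hk : flipSet n (k + 1) = flip n 1 '' flipSet n k := by
      rw [flipSet, flipSet, Set.image_image]
      exact Set.image_congr fun x _ => flip_succ n k x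
    rw [hk, flipSet_eq n k, Set.image_image, flipAlphabet, ← Set.image_list_map,
      Set.image_image]
    refine Set.image_congr fun w hw => flip_one_evalPos fun j hj => ?_
    exact add_two_le_of_mem_flipAlphabet (hw j hj)

theorem rdiv_evalPos_iff {n : ℕ} {w W : List ℕ} (hw : ∀ x ∈ w, x + 2 ≤ n)
    (hW : ∀ x ∈ W, x + 2 ≤ n) : RDiv n (evalPos n w) (evalPos n W) ↔ ∃ z, W ~~ z ++ w := by
  rw [RDiv, mem_Bplus_iff]
  constructor
  · rintro ⟨z, hz, he⟩
    refine ⟨z, eqv_of_evalPos_eq hW (List.forall_mem_append.mpr ⟨hz, hw⟩) ?_⟩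
    rw [evalPos_append, he, inv_mul_cancel_right]
  · rintro ⟨z, hz⟩
    refine ⟨z, fun x hx => hW x (hz.mem_iff.mpr (List.mem_append_left _ hx)), ?_⟩
    rw [evalPos_eq_of_eqv hz hW, evalPos_append, mul_inv_cancel_right]

theorem eq_of_rdiv_of_rdiv {n : ℕ} {x y : B n} (h₁ : RDiv n x y) (h₂ : RDiv n y x) : x = y := by
  obtain ⟨w₁, hw₁, he₁⟩ := mem_Bplus_iff.mp h₁
  obtain ⟨w₂, hw₂, he₂⟩ := mem_Bplus_iff.mp h₂
  have h : w₁ ++ w₂ ~~ [] := eqv_of_evalPos_eq (List.forall_mem_append.mpr ⟨hw₁, hw₂⟩) (by simp)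
    (by rw [evalPos_append, he₁, he₂, evalPos_nil]; group)
  obtain ⟨rfl, -⟩ : w₁ = [] ∧ w₂ = [] := by simpa using h.length_eq
  exact (mul_inv_eq_one.mp he₁.symm).symm

theorem IsMaxRDivIn.unique {n : ℕ} {X : Set (B n)} {β δ₁ δ₂ : B n} (h₁ : IsMaxRDivIn n X β δ₁)
    (h₂ : IsMaxRDivIn n X β δ₂) : δ₁ = δ₂ :=
  eq_of_rdiv_of_rdiv (h₂.2.2 δ₁ h₁.1 h₁.2.1) (h₁.2.2 δ₂ h₂.1 h₂.2.1)

theorem exists_isMaxRDivIn_evalPos {n : ℕ} {A : Set ℕ} (hA : ∀ j ∈ A, j + 2 ≤ n) {β : B n}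
    (hβ : β ∈ Bplus n n) : ∃ δ, IsMaxRDivIn n (evalPos n '' {w | ∀ j ∈ w, j ∈ A}) β δ := by
  obtain ⟨W, hW, rfl⟩ := mem_Bplus_iff.mp hβ
  obtain ⟨v, hvA, hvW, hv⟩ := exists_max_suffix A W
  have hrange {w : List ℕ} (hw : ∀ j ∈ w, j ∈ A) : ∀ j ∈ w, j + 2 ≤ n := fun j hj => hA j (hw j hj)
  refine ⟨evalPos n v, ⟨v, hvA, rfl⟩, (rdiv_evalPos_iff (hrange hvA) hW).mpr hvW, ?_⟩
  rintro _ ⟨v₀, hv₀, rfl⟩ h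
  exact (rdiv_evalPos_iff (hrange hv₀) (hrange hvA)).mpr
    (hv v₀ hv₀ ((rdiv_evalPos_iff (hrange hv₀) hW).mp h))

theorem exists_unique_max_right_divisor_in_flip_general (n k : ℕ)
    (β : B n) (hβ : β ∈ Bplus n n) :
    ∃! β₁ : B n, IsMaxRDivIn n (flipSet n k) β β₁ := by
  rw [flipSet_eq]
  obtain ⟨δ, hδ⟩ := exists_isMaxRDivIn_evalPos (fun _ => add_two_le_of_mem_flipAlphabet) hβ
  exact ⟨δ, hδ, fun δ' hδ' => hδ'.unique hδ⟩

/-- For `n ≥ 3` and `k ≥ 0`, every `β ∈ B⁺_n` admits a unique maximal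
right divisor lying in `φ_n^k(B⁺_{n-1})`. -/
theorem exists_unique_max_right_divisor_in_flip (n k : ℕ) (hn : 3 ≤ n)
    (β : B n) (hβ : β ∈ Bplus n n) :
    ∃! β₁ : B n, IsMaxRDivIn n (flipSet n k) β β₁ :=
  exists_unique_max_right_divisor_in_flip_general n k β hβ

end Braid
end

section
/- For n ≥ 3, the submonoid B⁺_{n−1} of B⁺_n is closed under right divisors: if β ∈ B⁺_{n−1} and γ ∈ B⁺_n right divides β, then γ ∈ B⁺_{n−1}. -/
namespace Braid

/-!
Let `B n` act on `ℚⁿ` by the Burau representation at `t = 1/2`, written on row vectors: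
`σ_i` replaces the coordinates `(a, b)` in positions `i - 1, i` by `(a/2 + b, a/2)`.
Every `σ_i` preserves the standard simplex, `σ_1, …, σ_{n-2}` fix the last vertex `e`, and
`σ_{n-1}` moves every point of the simplex to one whose last coordinate is at most `1/2`.
So `B⁺_{n-1}` fixes `e`, `B⁺_n` maps the simplex minus `e` into itself, and a positive braid
outside `B⁺_{n-1}` sends `e` off `e`. If `γ ∉ B⁺_{n-1}`, then `β e = (βγ⁻¹)(γ e) ≠ e`,
contradicting `β ∈ B⁺_{n-1}`.
-/

open Set

section BurauStep

variable {n : ℕ} (a b : Fin n)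

def burauStep (r : Fin n → ℚ) : Fin n → ℚ :=
  fun k => if k = a then r a / 2 + r b else if k = b then r a / 2 else r k

def burauStepInv (r : Fin n → ℚ) : Fin n → ℚ :=
  fun k => if k = a then 2 * r b else if k = b then r a - r b else r k

variable {a b}

theorem burauStepInv_burauStep (hab : a ≠ b) (r : Fin n → ℚ) :
    burauStepInv a b (burauStep a b r) = r := by
  funext k
  simp only [burauStep, burauStepInv]
  split_ifs <;> simp_all
  ring

theorem burauStep_burauStepInv (hab : a ≠ b) (r : Fin n → ℚ) :
    burauStep a b (burauStepInv a b r) = r := by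
  funext k
  simp only [burauStep, burauStepInv]
  split_ifs <;> simp_all

def burauStepPerm (hab : a ≠ b) : Equiv.Perm (Fin n → ℚ) :=
  ⟨burauStep a b, burauStepInv a b, burauStepInv_burauStep hab, burauStep_burauStepInv hab⟩

theorem burauStep_comm {c d : Fin n} (hac : a ≠ c) (had : a ≠ d) (hbc : b ≠ c) (hbd : b ≠ d)
    (r : Fin n → ℚ) : burauStep a b (burauStep c d r) = burauStep c d (burauStep a b r) := by
  funext k
  simp only [burauStep]
  split_ifs <;> simp_all [hac.symm, had.symm, hbc.symm, hbd.symm]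

theorem burauStep_braid {c : Fin n} (hab : a ≠ b) (hbc : b ≠ c) (hac : a ≠ c) (r : Fin n → ℚ) :
    burauStep a b (burauStep b c (burauStep a b r)) =
      burauStep b c (burauStep a b (burauStep b c r)) := by
  funext k
  simp only [burauStep]
  split_ifs <;> simp_all [hab.symm, hbc.symm, hac.symm] <;> ring

theorem burauStep_single {k : Fin n} (hka : k ≠ a) (hkb : k ≠ b) (c : ℚ) :
    burauStep a b (Pi.single k c) = Pi.single k c := by
  funext j
  simp only [burauStep]
  split_ifs <;> simp_all [Pi.single_apply, hka.symm, hkb.symm]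

theorem burauStep_mem_stdSimplex (hab : a ≠ b) {r : Fin n → ℚ} (hr : r ∈ stdSimplex ℚ (Fin n)) :
    burauStep a b r ∈ stdSimplex ℚ (Fin n) := by
  obtain ⟨hnonneg, hsum⟩ := hr
  refine ⟨fun k => ?_, ?_⟩
  · have := hnonneg a; have := hnonneg b; have := hnonneg k
    simp only [burauStep]
    split_ifs <;> positivity
  · have hshift : ∀ k, burauStep a b r k =
        r k + ((if k = a then r b - r a / 2 else 0) + (if k = b then r a / 2 - r b else 0)) := by
      intro k
      simp only [burauStep]
      split_ifs <;> simp_all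
      ring
    simp [Finset.sum_congr rfl fun k _ => hshift k, Finset.sum_add_distrib, hsum]

theorem burauStep_apply_right_lt_one (hab : a ≠ b) {r : Fin n → ℚ}
    (hr : r ∈ stdSimplex ℚ (Fin n)) : burauStep a b r b < 1 := by
  have := (mem_Icc_of_mem_stdSimplex hr a).2
  simp only [burauStep, if_neg hab.symm, if_true]
  linarith

end BurauStep

def burauGen (n : ℕ) (i : Fin (n - 1)) : Equiv.Perm (Fin n → ℚ) :=
  burauStepPerm (a := ⟨i, by omega⟩) (b := ⟨i + 1, by omega⟩) (by simp [Fin.ext_iff])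

theorem burauGen_braidRels (n : ℕ) :
    ∀ r ∈ braidRels (n - 1), FreeGroup.lift (burauGen n) r = 1 := by
  rintro r ⟨i, j, ⟨hij, rfl⟩ | ⟨hij, rfl⟩⟩ <;>
    simp only [map_mul, map_inv, FreeGroup.lift_apply_of, mul_inv_eq_iff_eq_mul]
  · refine Equiv.ext fun r => burauStep_comm ?_ ?_ ?_ ?_ r <;> simp [Fin.ext_iff] <;> omega
  · obtain ⟨j, hj⟩ := j
    obtain rfl : j = i + 1 := hij
    refine Equiv.ext fun r => burauStep_braid ?_ ?_ ?_ r <;> simp [Fin.ext_iff]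
    omega

noncomputable def burau (n : ℕ) : B n →* Equiv.Perm (Fin n → ℚ) :=
  PresentedGroup.toGroup (burauGen_braidRels n)

theorem coe_burau_gen {n i : ℕ} (hi : i - 1 < n - 1) :
    ⇑(burau n (gen n i)) = burauStep ⟨i - 1, by omega⟩ ⟨i - 1 + 1, by omega⟩ := by
  rw [gen, dif_pos hi, burau, PresentedGroup.toGroup.of]
  rfl

theorem mapsTo_burau_of_mem_Bplus {n k : ℕ} {s : Set (Fin n → ℚ)}
    (hgen : ∀ i, 1 ≤ i → i + 1 ≤ k → MapsTo (burau n (gen n i)) s s) {x : B n}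
    (hx : x ∈ Bplus n k) : MapsTo (burau n x) s s := by
  induction hx using Submonoid.closure_induction with
  | mem _ hy =>
    obtain ⟨i, hi, hik, rfl⟩ := hy
    exact hgen i hi hik
  | one => simpa using mapsTo_id s
  | mul _ _ _ _ hx hy => simpa using hx.comp hy

theorem burau_gen_mapsTo_stdSimplex {n i : ℕ} :
    MapsTo (burau n (gen n i)) (stdSimplex ℚ (Fin n)) (stdSimplex ℚ (Fin n)) := by
  by_cases hi : i - 1 < n - 1
  · rw [coe_burau_gen hi]
    exact fun r => burauStep_mem_stdSimplex (by simp [Fin.ext_iff])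
  · simpa [gen, hi] using mapsTo_id _

def simplexMinusLast (n : ℕ) : Set (Fin (n + 1) → ℚ) :=
  stdSimplex ℚ (Fin (n + 1)) \ {Pi.single (Fin.last n) 1}

section LastVertex

variable {n : ℕ}

theorem burau_single_last_of_mem_Bplus {x : B (n + 1)} (hx : x ∈ Bplus (n + 1) n) :
    burau (n + 1) x (Pi.single (Fin.last n) 1) = Pi.single (Fin.last n) 1 := by
  refine mapsTo_burau_of_mem_Bplus (fun i hi hin => ?_) hx (mem_singleton _)
  rw [mapsTo_singleton, mem_singleton_iff, coe_burau_gen (by omega)]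
  exact burauStep_single (by simp [Fin.ext_iff]; omega) (by simp [Fin.ext_iff]; omega) 1

theorem burau_gen_last_mapsTo_simplexMinusLast (hn : 1 ≤ n) :
    MapsTo (burau (n + 1) (gen (n + 1) n)) (stdSimplex ℚ (Fin (n + 1)))
      (simplexMinusLast n) := by
  intro r hr
  refine ⟨burau_gen_mapsTo_stdSimplex hr, fun hlast => ?_⟩
  rw [mem_singleton_iff, coe_burau_gen (by omega)] at hlast
  have hlt := burauStep_apply_right_lt_one (a := ⟨n - 1, by omega⟩) (b := ⟨n - 1 + 1, by omega⟩)
    (by simp [Fin.ext_iff]) hr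
  rw [hlast, show (⟨n - 1 + 1, _⟩ : Fin (n + 1)) = Fin.last n from Fin.ext (by simp; omega)] at hlt
  simp at hlt

theorem mapsTo_burau_simplexMinusLast {x : B (n + 1)} (hx : x ∈ Bplus (n + 1) (n + 1)) :
    MapsTo (burau (n + 1) x) (simplexMinusLast n) (simplexMinusLast n) := by
  refine mapsTo_burau_of_mem_Bplus (fun i hi hin => ?_) hx
  obtain hin' | rfl : i < n ∨ i = n := by omega
  · have hfix := burau_single_last_of_mem_Bplus (Submonoid.subset_closure ⟨i, hi, hin', rfl⟩)
    rintro r ⟨hr, hre⟩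
    refine ⟨burau_gen_mapsTo_stdSimplex hr, fun hfr => hre ?_⟩
    exact (burau (n + 1) _).injective (hfr.trans hfix.symm)
  · exact (burau_gen_last_mapsTo_simplexMinusLast hi).mono_left sdiff_subset

theorem mem_Bplus_pred_or_burau_single_last_mem {x : B (n + 1)} (hx : x ∈ Bplus (n + 1) (n + 1)) :
    x ∈ Bplus (n + 1) n ∨
      burau (n + 1) x (Pi.single (Fin.last n) 1) ∈ simplexMinusLast n := by
  induction hx using Submonoid.closure_induction with
  | mem _ hy =>
    obtain ⟨i, hi, hin, rfl⟩ := hy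
    obtain hin' | rfl : i < n ∨ i = n := by omega
    · exact .inl (Submonoid.subset_closure ⟨i, hi, hin', rfl⟩)
    · exact .inr (burau_gen_last_mapsTo_simplexMinusLast hi (single_mem_stdSimplex ℚ _))
  | one => exact .inl (one_mem _)
  | mul x y hx _ ihx ihy =>
    rw [map_mul, Equiv.Perm.mul_apply]
    rcases ihy with hy | hy
    · rw [burau_single_last_of_mem_Bplus hy]
      exact ihx.imp (mul_mem · hy) id
    · exact .inr (mapsTo_burau_simplexMinusLast hx hy)

end LastVertex

theorem Bplus_pred_closed_under_right_divisors_general (n : ℕ) (β γ : B n)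
    (hβ : β ∈ Bplus n (n - 1)) (hγ : γ ∈ Bplus n n) (h : β * γ⁻¹ ∈ Bplus n n) :
    γ ∈ Bplus n (n - 1) := by
  cases n with
  | zero => exact hγ
  | succ n =>
    refine (mem_Bplus_pred_or_burau_single_last_mem hγ).resolve_right fun hγe => ?_
    have hβe := mapsTo_burau_simplexMinusLast h hγe
    rw [← Equiv.Perm.mul_apply, ← map_mul, inv_mul_cancel_right,
      burau_single_last_of_mem_Bplus hβ] at hβe
    exact hβe.2 rfl

/-- For `n ≥ 3`, the submonoid `B⁺_{n-1}` of `B⁺_n` is closed under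
right divisors. -/
theorem Bplus_pred_closed_under_right_divisors (n : ℕ) (hn : 3 ≤ n) (β γ : B n)
    (hβ : β ∈ Bplus n (n - 1)) (hγ : γ ∈ Bplus n n) (h : β * γ⁻¹ ∈ Bplus n n) :
    γ ∈ Bplus n (n - 1) :=
  Bplus_pred_closed_under_right_divisors_general n β γ hβ hγ h

end Braid
end
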